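/- arXiv:2411.11566 — 5 statements merged into one kernel-verified Lean document; each statement's English description precedes it below -/
import Mathlib

section
/- Let B be a commutative ring, G a finite group of ring automorphisms of B, and A = B^G the subring of G-fixed elements. If φ, ψ : B → D are ring homomorphisms into an integral domain D that agree on A, then there exists σ ∈ G such that φ = ψ ∘ σ. -/
open Polynomial

/-- Pointwise version: for each `b` there is some `σ ∈ G` with `φ b = ψ (σ b)`. -/
theorem key_pointwise {B : Type*} [CommRing B] (G : Subgroup (RingAut B)) [Finite G]
    {D : Type*} [CommRing D] [IsDomain D] (φ ψ : B →+* D)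
    (h : ∀ b : B, (∀ σ : G, (σ : RingAut B) b = b) → φ b = ψ b) (b : B) :
    ∃ σ : G, φ b = ψ ((σ : RingAut B) b) := by
  classical
  cases nonempty_fintype G
  set p : Polynomial B := ∏ σ : G, (X - C ((σ : RingAut B) b)) with hp
  have hfix : ∀ τ : G, p.map ((τ : RingAut B) : B →+* B) = p := by
    intro τ
    rw [hp, Polynomial.map_prod]
    refine Fintype.prod_equiv (Equiv.mulLeft τ) _ _ fun σ => ?_
    simp only [Polynomial.map_sub, Polynomial.map_X, Polynomial.map_C, Subgroup.coe_mul,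
      Equiv.coe_mulLeft]
    rfl
  have hcoeff : ∀ k, φ (p.coeff k) = ψ (p.coeff k) := by
    intro k
    refine h _ fun τ => ?_
    have := congrArg (fun q : Polynomial B => q.coeff k) (hfix τ)
    simpa [Polynomial.coeff_map] using this
  have hmapeq : p.map φ = p.map ψ := by
    ext k
    simp only [Polynomial.coeff_map]
    exact hcoeff k
  have heval : (p.map ψ).eval (φ b) = 0 := by
    rw [← hmapeq, Polynomial.eval_map, Polynomial.eval₂_at_apply]
    have hpe : p.eval b = 0 := by
      rw [hp, Polynomial.eval_prod]
      refine Finset.prod_eq_zero (Finset.mem_univ (1 : G)) ?_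
      simp only [Polynomial.eval_sub, Polynomial.eval_X, Polynomial.eval_C]
      show b - b = 0
      exact sub_self b
    rw [hpe, map_zero]
  have hprod : (∏ σ : G, (φ b - ψ ((σ : RingAut B) b))) = 0 := by
    rw [← heval, hp, Polynomial.map_prod, Polynomial.eval_prod]
    simp [Polynomial.map_sub]
  rcases Finset.prod_eq_zero_iff.mp hprod with ⟨σ, -, hσ⟩
  exact ⟨σ, sub_eq_zero.mp hσ⟩

/-- Lifting a ring automorphism to the polynomial ring, as a monoid hom. -/
noncomputable def mpoly (B : Type*) [CommRing B] : RingAut B →* RingAut (Polynomial B) where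
  toFun σ := Polynomial.mapEquiv σ
  map_one' := by
    ext p : 1
    show Polynomial.map _ p = p
    have : ((1 : RingAut B) : B →+* B) = RingHom.id B := rfl
    rw [this, Polynomial.map_id]
  map_mul' σ τ := by
    ext p : 1
    show Polynomial.map _ p = Polynomial.map _ (Polynomial.map _ p)
    rw [Polynomial.map_map]
    rfl

/-- Lemma: if two ring homomorphisms into a domain agree on the fixed subring
of a finite group of ring automorphisms, they differ by an element of the group. -/
theorem stmt_0 {B : Type*} [CommRing B] (G : Subgroup (RingAut B)) [Finite G]
    {D : Type*} [CommRing D] [IsDomain D] (φ ψ : B →+* D)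
    (h : ∀ b : B, (∀ σ : G, (σ : RingAut B) b = b) → φ b = ψ b) :
    ∃ σ : G, ∀ b : B, φ b = ψ ((σ : RingAut B) b) := by
  classical
  cases nonempty_fintype G
  by_contra hc
  push_neg at hc
  choose w hw using hc
  let m := mpoly B
  let G' : Subgroup (RingAut (Polynomial B)) := (m.comp G.subtype).range
  have hGfin : Finite G' := by
    have : (Set.range (m.comp G.subtype)).Finite := Set.finite_range _
    exact this.to_subtype
  let e : G ≃ Fin (Fintype.card G) := Fintype.equivFin G
  let g : Polynomial B := ∑ τ : G, (Polynomial.monomial (e τ : ℕ)) (w τ)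
  have hgc : ∀ τ₀ : G, g.coeff (e τ₀ : ℕ) = w τ₀ := by
    intro τ₀
    simp only [g, Polynomial.finset_sum_coeff, Polynomial.coeff_monomial]
    rw [Finset.sum_eq_single τ₀]
    · simp
    · intro b _ hb
      rw [if_neg]
      intro hcontra
      exact hb (e.injective (Fin.val_injective hcontra))
    · simp
  have h' : ∀ c : Polynomial B,
      (∀ σ : G', (σ : RingAut (Polynomial B)) c = c) →
      (Polynomial.mapRingHom φ) c = (Polynomial.mapRingHom ψ) c := by
    intro c hcfix
    ext k
    simp only [Polynomial.coe_mapRingHom, Polynomial.coeff_map]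
    refine h _ fun τ => ?_
    have hτ : (m τ : RingAut (Polynomial B)) c = c := hcfix ⟨m τ, ⟨τ, rfl⟩⟩
    have := congrArg (fun q : Polynomial B => q.coeff k) hτ
    simpa [m, mpoly, Polynomial.coeff_map] using this
  obtain ⟨σ', hσ'⟩ := key_pointwise G' (Polynomial.mapRingHom φ) (Polynomial.mapRingHom ψ) h' g
  obtain ⟨τ, hτ⟩ := σ'.2
  have hτg : ((σ' : RingAut (Polynomial B)) : Polynomial B → Polynomial B) g
      = Polynomial.map (((τ : G) : RingAut B) : B →+* B) g := by
    rw [← hτ]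
    rfl
  have hfinal : φ (w τ) = ψ (((τ : G) : RingAut B) (w τ)) := by
    have hco := congrArg (fun q : Polynomial D => q.coeff (e τ : ℕ)) hσ'
    simp only [Polynomial.coe_mapRingHom] at hco
    rw [hτg] at hco
    simp only [Polynomial.coeff_map, Polynomial.map_map] at hco
    simpa [hgc τ, Polynomial.coeff_map] using hco
  exact hw τ hfinal
end

section
/- For n ≥ 2 and the polynomial f(X) = X^n − aX + b over a field, the discriminant of f equals (−1)^{n(n−1)/2} · (n^n b^{n−1} − (n−1)^{n−1} a^n). -/
open Polynomial

private lemma trinomial_aux {E : Type*} [Field E] (m : ℕ) (A B : E)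
    (F : E[X]) (hF : F = X ^ (m + 2) - C A * X + C B)
    (hsp : F.Splits) :
    (F.roots.map (fun α => ((m + 2 : ℕ) : E) * α ^ (m + 1) - A)).prod
      = ((m + 2 : ℕ) : E) ^ (m + 2) * B ^ (m + 1)
        - ((m + 1 : ℕ) : E) ^ (m + 1) * A ^ (m + 2) := by
  set N : E := ((m + 2 : ℕ) : E) with hN
  set M : E := ((m + 1 : ℕ) : E) with hMdef
  have hM : M = N - 1 := by push_cast [hN, hMdef]; ring
  have hmon : F.Monic := by
    have h1 : F = X ^ (m + 2) - (C A * X - C B) := by rw [hF]; ring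
    rw [h1]
    apply monic_X_pow_sub
    apply lt_of_le_of_lt (degree_sub_le _ _)
    rw [max_lt_iff]
    constructor
    · exact lt_of_le_of_lt (degree_C_mul_X_le A) (by exact_mod_cast by omega)
    · exact lt_of_le_of_lt degree_C_le (by exact_mod_cast by omega)
  have hndeg : F.natDegree = m + 2 := by
    have h1 : F = X ^ (m + 2) - (C A * X - C B) := by rw [hF]; ring
    have hdlt : (C A * X - C B).degree < (X ^ (m + 2) : E[X]).degree := by
      rw [degree_X_pow]
      apply lt_of_le_of_lt (degree_sub_le _ _)
      rw [max_lt_iff]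
      constructor
      · exact lt_of_le_of_lt (degree_C_mul_X_le A) (by exact_mod_cast by omega)
      · exact lt_of_le_of_lt degree_C_le (by exact_mod_cast by omega)
    have h2 : F.degree = (m + 2 : ℕ) := by
      rw [h1, degree_sub_eq_left_of_degree_lt hdlt, degree_X_pow]
    exact natDegree_eq_of_degree_eq_some h2
  have hcard : F.roots.card = m + 2 := (splits_iff_card_roots.mp hsp).trans hndeg
  have hprodF : F = (F.roots.map fun α => X - C α).prod :=
    hsp.eq_prod_roots_of_monic hmon
  have heval : ∀ x : E, (F.roots.map fun α => x - α).prod = x ^ (m + 2) - A * x + B := by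
    intro x
    have h1 : eval x F = x ^ (m + 2) - A * x + B := by simp [hF]
    rw [← h1]
    conv_rhs => rw [hprodF]
    rw [eval_multiset_prod, Multiset.map_map]
    congr 1
    apply Multiset.map_congr rfl
    intro α _
    simp
  have hroot : ∀ α ∈ F.roots, α ^ (m + 2) = A * α - B := by
    intro α hα
    have h0 : (F.roots.map fun x => α - x).prod = 0 :=
      Multiset.prod_eq_zero (Multiset.mem_map.mpr ⟨α, hα, sub_self α⟩)
    have h1 := heval α
    rw [h0] at h1
    linear_combination -h1
  have hpow : ∀ x : E, x ^ (m + 1) * x = x ^ (m + 2) := fun x => by ring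
  by_cases hB : B = 0
  · -- b = 0 case
    by_cases hA : A = 0
    · -- all roots are 0, each factor is 0
      obtain ⟨α, hα⟩ := Multiset.card_pos_iff_exists_mem.mp (by rw [hcard]; omega)
      have hα0 : α = 0 := by
        have h1 := hroot α hα
        rw [hA, hB] at h1
        simpa using pow_eq_zero_iff (n := m + 2) (by omega) |>.mp (by simpa using h1)
      have h0 : (0 : E) ∈ F.roots.map (fun α => N * α ^ (m + 1) - A) := by
        refine Multiset.mem_map.mpr ⟨α, hα, ?_⟩
        rw [hα0, hA]
        simp
      rw [Multiset.prod_eq_zero h0, hA, hB]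
      simp
    · -- F = X * (X^(m+1) - C A)
      set G : E[X] := X ^ (m + 1) - C A with hGdef
      have hFG : F = X * G := by rw [hF, hB, hGdef, C_0]; ring
      have hGmon : G.Monic := monic_X_pow_sub_C A (by omega)
      have hG0 : G ≠ 0 := hGmon.ne_zero
      have hX0 : (X : E[X]) ≠ 0 := X_ne_zero
      have hmul0 : (X : E[X]) * G ≠ 0 := mul_ne_zero hX0 hG0
      have hGsp : G.Splits := by
        have h1 := hsp
        rw [hFG] at h1
        exact Splits.of_dvd h1 hmul0 (dvd_mul_left G X)
      have hGcard : G.roots.card = m + 1 := by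
        rw [splits_iff_card_roots.mp hGsp, hGdef, natDegree_X_pow_sub_C]
      have hroots : F.roots = 0 ::ₘ G.roots := by
        rw [hFG, roots_mul hmul0, roots_X, Multiset.singleton_add]
      have hGroot : ∀ β ∈ G.roots, N * β ^ (m + 1) - A = M * A := by
        intro β hβ
        have h1 : eval β G = 0 := (mem_roots hG0).mp hβ
        rw [hGdef] at h1
        simp only [eval_sub, eval_pow, eval_X, eval_C] at h1
        have h2 : β ^ (m + 1) = A := by linear_combination h1
        rw [h2, hM]
        ring
      rw [hroots, Multiset.map_cons, Multiset.prod_cons,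
        Multiset.map_congr rfl hGroot, Multiset.map_const', Multiset.prod_replicate, hGcard,
        hB]
      rw [zero_pow (by omega : m + 1 ≠ 0)]
      rw [mul_pow]
      ring
  · -- b ≠ 0 case
    have hprodR : F.roots.prod = (-1 : E) ^ (m + 2) * B := by
      have h1 := heval 0
      simp only [zero_sub, zero_pow (by omega : m + 2 ≠ 0), mul_zero, sub_zero, zero_add] at h1
      rw [Multiset.prod_map_neg, hcard] at h1
      have h2 : ((-1 : E) ^ (m + 2)) * ((-1 : E) ^ (m + 2)) = 1 := by
        rw [← mul_pow]
        simp
      calc F.roots.prod = (((-1:E)^(m+2)) * ((-1:E)^(m+2))) * F.roots.prod := by rw [h2, one_mul]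
        _ = (-1:E)^(m+2) * ((-1:E)^(m+2) * F.roots.prod) := by ring
        _ = (-1:E)^(m+2) * B := by rw [h1]
    have hcancel : ((-1 : E) ^ (m + 2) * B) ≠ 0 :=
      mul_ne_zero (pow_ne_zero _ (by norm_num)) hB
    set P : E := (F.roots.map (fun α => N * α ^ (m + 1) - A)).prod with hP
    have key : P * ((-1 : E) ^ (m + 2) * B)
        = (F.roots.map (fun α => M * A * α - N * B)).prod := by
      rw [← hprodR, hP]
      have hid : F.roots.prod = (F.roots.map (fun α : E => α)).prod := by rw [Multiset.map_id']
      rw [hid, ← Multiset.prod_map_mul]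
      apply congrArg
      apply Multiset.map_congr rfl
      intro α hα
      have h1 := hroot α hα
      rw [hM]
      linear_combination N * h1
    by_cases hc : M * A = 0
    · have h1 : (F.roots.map (fun α => M * A * α - N * B)).prod = (-(N * B)) ^ (m + 2) := by
        rw [Multiset.map_congr rfl (fun α _ => by rw [hc]; ring :
          ∀ α ∈ F.roots, M * A * α - N * B = -(N * B)),
          Multiset.map_const', Multiset.prod_replicate, hcard]
      rw [h1] at key
      have h2 : P = N ^ (m + 2) * B ^ (m + 1) := by
        apply mul_right_cancel₀ hcancel
        rw [key]
        ring
      rw [h2]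
      have h3 : M ^ (m + 1) * A ^ (m + 2) = (M * A) ^ (m + 1) * A := by ring
      rw [h3, hc]
      simp
    · obtain ⟨c, hcM⟩ : ∃ c : E, c = M * A := ⟨_, rfl⟩
      obtain ⟨d, hd⟩ : ∃ d : E, d = N * B / c := ⟨_, rfl⟩
      have hc0 : c ≠ 0 := by rw [hcM]; exact hc
      have hcd : c * d = N * B := by rw [hd, mul_comm, div_mul_cancel₀ _ hc0]
      have h1 : (F.roots.map (fun α => M * A * α - N * B)).prod
          = (-c) ^ (m + 2) * (d ^ (m + 2) - A * d + B) := by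
        rw [Multiset.map_congr rfl (fun α _ => by rw [← hcd, hcM]; ring :
          ∀ α ∈ F.roots, M * A * α - N * B = -c * (d - α))]
        rw [show (fun α : E => -c * (d - α)) = fun α : E => (fun _ : E => -c) α * ((fun β => d - β) α) from rfl]
        rw [Multiset.prod_map_mul, Multiset.map_const', Multiset.prod_replicate, hcard, heval d]
      rw [h1] at key
      rw [hM] at hcM
      have hneg : (-c) ^ (m + 2) = (-1 : E) ^ (m + 2) * c ^ (m + 2) := by rw [neg_pow]
      have hcdn : c ^ (m + 2) * d ^ (m + 2) = N ^ (m + 2) * B ^ (m + 2) := by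
        rw [← mul_pow, hcd, mul_pow]
      have hcd1 : c ^ (m + 2) * d = c ^ (m + 1) * (N * B) := by
        rw [show c ^ (m + 2) = c ^ (m + 1) * c from by ring, mul_assoc, hcd]
      have hcp : c ^ (m + 1) = (N - 1) ^ (m + 1) * A ^ (m + 1) := by rw [hcM, mul_pow]
      apply mul_right_cancel₀ hcancel
      rw [key, hM, hneg]
      linear_combination ((((-1:E)) ^ (m + 2))) * hcdn + (-((-1:E)) ^ (m + 2) * A) * hcd1 +
        (-(((-1:E)) ^ (m + 2)) * (A * N * B - B * c)) * hcp +
        ((((-1:E)) ^ (m + 2)) * B * (N - 1) ^ (m + 1) * A ^ (m + 1)) * hcM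

/-- For `n ≥ 2` and `f(X) = X^n − aX + b` over a field, the discriminant
`(−1)^{n(n−1)/2} ∏ f'(αᵢ)` (the αᵢ being the roots of `f` in a splitting field)
equals `(−1)^{n(n−1)/2} (nⁿ bⁿ⁻¹ − (n−1)ⁿ⁻¹ aⁿ)`. -/
theorem stmt_1 {K E : Type*} [Field K] [Field E] [Algebra K E]
    (n : ℕ) (hn : 2 ≤ n) (a b : K)
    (f : K[X]) (hf : f = X ^ n - C a * X + C b)
    (hsplit : (f.map (algebraMap K E)).Splits) :
    (-1 : E) ^ (n * (n - 1) / 2) *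
      (((f.map (algebraMap K E)).roots).map
        (fun α => (derivative (f.map (algebraMap K E))).eval α)).prod
      = (-1 : E) ^ (n * (n - 1) / 2) *
        algebraMap K E (n ^ n * b ^ (n - 1) - (n - 1) ^ (n - 1) * a ^ n) := by
  obtain ⟨m, rfl⟩ : ∃ m, n = m + 2 := ⟨n - 2, by omega⟩
  congr 1
  have hmap : f.map (algebraMap K E)
      = X ^ (m + 2) - C (algebraMap K E a) * X + C (algebraMap K E b) := by
    simp [hf]
  have hsp : (f.map (algebraMap K E)).Splits :=
    hsplit
  have hder : derivative (f.map (algebraMap K E))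
      = C (((m + 2 : ℕ) : E)) * X ^ (m + 1) - C (algebraMap K E a) := by
    rw [hmap]
    simp [derivative_X_pow]
    rw [show (C (2:E)) = 2 from map_ofNat C 2]; ring
  have hfun : ∀ α ∈ (f.map (algebraMap K E)).roots,
      (derivative (f.map (algebraMap K E))).eval α
        = ((m + 2 : ℕ) : E) * α ^ (m + 1) - algebraMap K E a := by
    intro α _
    rw [hder]
    simp
  rw [Multiset.map_congr rfl hfun,
    trinomial_aux m (algebraMap K E a) (algebraMap K E b) _ hmap hsp]
  rw [show m + 2 - 1 = m + 1 from rfl]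
  simp only [map_sub, map_mul, map_pow, map_natCast, map_one]
  push_cast
  ring
end

section
/- If f(X) = X^n − aX + b is monic with roots α_1, …, α_n (in a splitting field), then ∏_{i=1}^n f'(α_i) = n^n b^{n−1} − (n−1)^{n−1} a^n. -/
open Polynomial

/-- For `f(X) = X^n − aX + b` monic with roots `α₁, …, αₙ` in a splitting field,
`∏ f'(αᵢ) = nⁿ bⁿ⁻¹ − (n−1)ⁿ⁻¹ aⁿ`. -/
theorem stmt_2 {K E : Type*} [Field K] [Field E] [Algebra K E]
    (n : ℕ) (hn : 2 ≤ n) (a b : K)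
    (f : K[X]) (hf : f = X ^ n - C a * X + C b)
    (hsplit : (f.map (algebraMap K E)).Splits) :
    (((f.map (algebraMap K E)).roots).map
        (fun α => (derivative (f.map (algebraMap K E))).eval α)).prod
      = algebraMap K E (n ^ n * b ^ (n - 1) - (n - 1) ^ (n - 1) * a ^ n) := by
  subst hf
  obtain ⟨m, rfl⟩ : ∃ m, n = m + 2 := ⟨n - 2, by omega⟩
  clear hn
  set A := algebraMap K E a with hA
  set B := algebraMap K E b with hB
  set F : E[X] := (X ^ (m+2) - C a * X + C b).map (algebraMap K E) with hFdef
  have hF : F = X ^ (m+2) - C A * X + C B := by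
    rw [hFdef, hA, hB]
    simp [Polynomial.map_sub, Polynomial.map_add, Polynomial.map_mul, Polynomial.map_pow]
  have hFmonic : F.Monic := by rw [hF]; monicity!; omega
  have hFdeg : F.natDegree = m + 2 := by
    rw [hF]; compute_degree!; simp [show ¬ (m+2=1) by omega]
  have hsplitF : F.Splits := hsplit
  have hcard : Multiset.card F.roots = m + 2 := (splits_iff_card_roots.mp hsplitF).trans hFdeg
  have hprodform : F = (F.roots.map fun α => X - C α).prod :=
    hsplitF.eq_prod_roots_of_monic hFmonic
  have hevalF : ∀ u : E, eval u F = u^(m+2) - A*u + B := by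
    intro u; rw [hF]; simp
  have heval : ∀ u : E, (F.roots.map fun α => u - α).prod = u^(m+2) - A*u + B := by
    intro u
    rw [← hevalF u]
    conv_rhs => rw [hprodform]
    rw [eval_multiset_prod, Multiset.map_map]
    simp
  have hderiv : ∀ u : E, eval u (derivative F) = ((m+2 : ℕ) : E) * u^(m+1) - A := by
    intro u; rw [hF]; simp [derivative_X_pow]; left; ring
  have hprodroots : F.roots.prod = (-1)^(m+2) * B := by
    have h0 := heval 0
    rw [mul_zero, sub_zero, zero_pow (by omega : m+2 ≠ 0), zero_add] at h0
    simp only [zero_sub] at h0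
    rw [show (fun α : E => -α) = Neg.neg from rfl, Multiset.prod_map_neg, hcard] at h0
    have hsq : ((-1:E)^(m+2)) * ((-1:E)^(m+2)) = 1 := by
      rw [← mul_pow]; simp
    calc F.roots.prod = ((-1:E)^(m+2) * (-1:E)^(m+2)) * F.roots.prod := by rw [hsq, one_mul]
      _ = (-1:E)^(m+2) * B := by rw [mul_assoc, h0]
  have hlin : ∀ c d : E, (F.roots.map fun α => c * α - d).prod
      = (-1)^(m+2) * (d^(m+2) - A*d*c^(m+1) + B*c^(m+2)) := by
    intro c d
    rcases eq_or_ne c 0 with rfl | hc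
    · simp only [zero_mul, zero_sub]
      rw [show (F.roots.map fun _ : E => -d) = Multiset.replicate (m+2) (-d) by
        rw [Multiset.map_const', hcard], Multiset.prod_replicate]
      rw [zero_pow (by omega : m+1 ≠ 0), zero_pow (by omega : m+2 ≠ 0)]
      ring
    · have hmap : (F.roots.map fun α => c*α - d) = F.roots.map fun α => (-c) * (d/c - α) := by
        refine Multiset.map_congr rfl fun α _ => ?_
        field_simp
        ring
      rw [hmap, Multiset.prod_map_mul, heval]
      rw [show (F.roots.map fun _ : E => -c) = Multiset.replicate (m+2) (-c) by
        rw [Multiset.map_const', hcard], Multiset.prod_replicate]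
      rw [div_pow]
      field_simp
      ring
  have hroot : ∀ α ∈ F.roots, α^(m+2) = A*α - B := by
    intro α hα
    have h : eval α F = 0 := isRoot_of_mem_roots hα
    rw [hevalF α] at h
    linear_combination h
  have hstep : (F.roots.map fun α => α * eval α (derivative F)).prod
      = (F.roots.map fun α => (((m+1:ℕ):E)*A) * α - ((m+2:ℕ):E)*B).prod := by
    refine congrArg _ (Multiset.map_congr rfl fun α hα => ?_)
    rw [hderiv α]
    have h := hroot α hα
    push_cast
    linear_combination ((m:E)+2) * h
  have hmul : (F.roots.map fun α => α * eval α (derivative F)).prod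
      = F.roots.prod * (F.roots.map fun α => eval α (derivative F)).prod := by
    rw [Multiset.prod_map_mul]
    congr 1
    simp
  have hNM : ((m+2:ℕ):E) = ((m+1:ℕ):E) + 1 := by push_cast; ring
  have hRHS : algebraMap K E (((m+2:ℕ):K) ^ (m + 2) * b ^ (m + 2 - 1)
        - (((m+2:ℕ):K) - 1) ^ (m + 2 - 1) * a ^ (m + 2))
      = ((m+2:ℕ):E)^(m+2) * B^(m+1) - ((m+1:ℕ):E)^(m+1) * A^(m+2) := by
    rw [show m + 2 - 1 = m + 1 from rfl]
    simp only [map_sub, map_mul, map_pow, map_natCast, map_one, ← hA, ← hB]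
    push_cast
    ring
  rw [hRHS]
  rcases eq_or_ne B 0 with hB0 | hB0
  · -- case b = 0
    have hF0 : F = X * (X^(m+1) - C A) := by
      rw [hF, hB0, map_zero, add_zero]; ring
    have hXg : (X : E[X]) * (X^(m+1) - C A) ≠ 0 := hF0 ▸ hFmonic.ne_zero
    have hroots : F.roots = 0 ::ₘ ((X:E[X])^(m+1) - C A).roots := by
      rw [hF0, roots_mul hXg, roots_X, Multiset.singleton_add]
    have hcardg : Multiset.card (((X:E[X])^(m+1) - C A).roots) = m + 1 := by
      have h := hcard; rw [hroots] at h; simpa using h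
    have hgroot : ∀ β ∈ ((X:E[X])^(m+1) - C A).roots, β^(m+1) = A := by
      intro β hβ
      have h : eval β ((X:E[X])^(m+1) - C A) = 0 := isRoot_of_mem_roots hβ
      simpa [sub_eq_zero] using h
    rw [hroots, Multiset.map_cons, Multiset.prod_cons]
    have h0 : eval 0 (derivative F) = -A := by
      rw [hderiv 0, zero_pow (by omega : m+1 ≠ 0)]; ring
    have hconst : (((X:E[X])^(m+1) - C A).roots.map fun β => eval β (derivative F)).prod
        = (((m+2:ℕ):E) * A - A)^(m+1) := by
      rw [show (((X:E[X])^(m+1) - C A).roots.map fun β => eval β (derivative F))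
          = Multiset.replicate (m+1) (((m+2:ℕ):E) * A - A) from ?_, Multiset.prod_replicate]
      rw [show (((X:E[X])^(m+1) - C A).roots.map fun β => eval β (derivative F))
          = ((X:E[X])^(m+1) - C A).roots.map fun _ => ((m+2:ℕ):E) * A - A from
        Multiset.map_congr rfl fun β hβ => by rw [hderiv β, hgroot β hβ]]
      rw [Multiset.map_const', hcardg]
    rw [h0, hconst, hB0, hNM, zero_pow (by omega : m+1 ≠ 0)]
    ring
  · apply mul_left_cancel₀ (a := (-1:E)^(m+2) * B) (by simp [hB0])
    calc ((-1:E)^(m+2) * B) * (F.roots.map fun α => eval α (derivative F)).prod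
        = F.roots.prod * (F.roots.map fun α => eval α (derivative F)).prod := by
          rw [hprodroots]
      _ = (F.roots.map fun α => α * eval α (derivative F)).prod := hmul.symm
      _ = (F.roots.map fun α => (((m+1:ℕ):E)*A) * α - ((m+2:ℕ):E)*B).prod := hstep
      _ = (-1)^(m+2) * ((((m+2:ℕ):E)*B)^(m+2) - A*(((m+2:ℕ):E)*B)*((((m+1:ℕ):E)*A))^(m+1)
            + B*((((m+1:ℕ):E)*A))^(m+2)) := hlin _ _
      _ = ((-1:E)^(m+2) * B) * (((m+2:ℕ):E)^(m+2) * B^(m+1) - ((m+1:ℕ):E)^(m+1) * A^(m+2)) := by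
          simp only [mul_pow]
          rw [hNM]
          generalize ((m+1:ℕ):E) = M
          ring
end

section
/- The discriminant of the cubic polynomial X^3 − tX^2 + (t−3)X + 1 over ℚ(t) is the square (t^2 − 3t + 9)^2; in particular, for every rational t where the cubic is irreducible, its Galois group over ℚ is cyclic of order 3. -/
open Polynomial

/-- The discriminant of the cubic `X³ + pX² + qX + r`. -/
def cubicDisc (p q r : ℚ) : ℚ :=
  18 * p * q * r - 4 * p ^ 3 * r + p ^ 2 * q ^ 2 - 4 * q ^ 3 - 27 * r ^ 2

lemma key_factor {K : Type*} [Field K] (T a r : K)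
    (ha : a ^ 3 - T * a ^ 2 + (T - 3) * a + 1 = 0)
    (hr : r ^ 3 - T * r ^ 2 + (T - 3) * r + 1 = 0) :
    (r - a) * (r * (1 - a) - 1) * (r * a - (a - 1)) = 0 := by
  linear_combination a * (1 - a) * hr + (r ^ 2 - r) * ha

/-- The discriminant of `X³ − tX² + (t−3)X + 1` is the square `(t² − 3t + 9)²`;
in particular, whenever this cubic is irreducible over `ℚ`, its Galois group is
cyclic of order `3`. -/
theorem stmt_12 (t : ℚ) :
    cubicDisc (-t) (t - 3) 1 = (t ^ 2 - 3 * t + 9) ^ 2 ∧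
    (Irreducible ((X : ℚ[X]) ^ 3 - C t * X ^ 2 + C (t - 3) * X + 1) →
      Nonempty (((X : ℚ[X]) ^ 3 - C t * X ^ 2 + C (t - 3) * X + 1).Gal ≃*
        Multiplicative (ZMod 3))) := by
  refine ⟨by unfold cubicDisc; ring, fun hirr => ?_⟩
  set p : ℚ[X] := X ^ 3 - C t * X ^ 2 + C (t - 3) * X + 1 with hp
  have hdeg : p.natDegree = 3 := by rw [hp]; compute_degree!
  have hmonic : p.Monic := by rw [hp]; monicity!
  have hK := SplittingField.splits p
  set K := p.SplittingField
  obtain ⟨a, ha⟩ : ∃ a, eval₂ (algebraMap ℚ K) a p = 0 := by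
    obtain ⟨a, ha⟩ := hK.exists_eval_eq_zero
      (by rw [degree_map, degree_eq_natDegree hmonic.ne_zero, hdeg]; exact (by norm_num))
    exact ⟨a, by rwa [eval_map] at ha⟩
  set T : K := algebraMap ℚ K t with hT
  have hEq : ∀ r : K, (aeval r) p = 0 → r ^ 3 - T * r ^ 2 + (T - 3) * r + 1 = 0 := by
    intro r h
    have h2 : (aeval r) ((X : ℚ[X]) ^ 3 - C t * X ^ 2 + C (t - 3) * X + 1) = 0 := h
    simp only [map_add, map_sub, map_mul, map_pow, aeval_X, aeval_C, map_one, map_ofNat] at h2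
    rw [hT]
    linear_combination h2
  have ha' : a ^ 3 - T * a ^ 2 + (T - 3) * a + 1 = 0 := by
    apply hEq; rwa [aeval_def]
  have h0 : a ≠ 0 := by
    rintro rfl; simp at ha'
  have h1 : (1 : K) - a ≠ 0 := by
    intro h
    have ha1 : a = 1 := by linear_combination -h
    rw [ha1] at ha'
    exact one_ne_zero (α := K) (by linear_combination -ha')
  -- every root of p lies in ℚ⟮a⟯
  have hroots : ∀ r ∈ p.rootSet K, r ∈ IntermediateField.adjoin ℚ {a} := by
    intro r hr
    have hre : r ^ 3 - T * r ^ 2 + (T - 3) * r + 1 = 0 :=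
      hEq r ((mem_rootSet.mp hr).2)
    have hmem : a ∈ IntermediateField.adjoin ℚ {a} :=
      IntermediateField.mem_adjoin_simple_self ℚ a
    have := key_factor T a r ha' hre
    rcases mul_eq_zero.mp this with h | h
    · rcases mul_eq_zero.mp h with h | h
      · rw [sub_eq_zero.mp h]; exact hmem
      · have : r = (1 - a)⁻¹ := by
          exact eq_inv_of_mul_eq_one_left (by linear_combination h)
        rw [this]
        exact (IntermediateField.adjoin ℚ {a}).inv_mem
          (sub_mem (one_mem _) hmem)
    · have : r = (a - 1) * a⁻¹ := by
        rw [← div_eq_mul_inv, eq_div_iff h0]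
        linear_combination h
      rw [this]
      exact mul_mem (sub_mem hmem (one_mem _)) ((IntermediateField.adjoin ℚ {a}).inv_mem hmem)
  have htop : IntermediateField.adjoin ℚ {a} = ⊤ := by
    have hadj : Algebra.adjoin ℚ (p.rootSet K) = ⊤ := SplittingField.adjoin_rootSet p
    rw [eq_top_iff]
    intro x _
    have : x ∈ Algebra.adjoin ℚ (p.rootSet K) := hadj ▸ Algebra.mem_top
    refine Algebra.adjoin_le ?_ this
    intro r hr
    exact hroots r hr
  have hint : IsIntegral ℚ a := by
    refine ⟨p, hmonic, ?_⟩
    rwa [← aeval_def] at ha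
  have hmin : minpoly ℚ a = p :=
    (minpoly.eq_of_irreducible_of_monic hirr (by rwa [← aeval_def] at ha) hmonic).symm
  have hfin : Module.finrank ℚ K = 3 := by
    rw [← IntermediateField.finrank_top' (F := ℚ) (E := K), ← htop,
      IntermediateField.adjoin.finrank hint, hmin, hdeg]
  have hcard : Nat.card p.Gal = 3 := by
    rw [Gal.card_of_separable hirr.separable, hfin]
  have : Fact (Nat.Prime 3) := ⟨by norm_num⟩
  have hcyc : IsCyclic p.Gal := isCyclic_of_prime_card hcard
  exact ⟨(zmodCyclicMulEquiv hcyc).symm.trans (by rw [hcard])⟩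
end

section
/- The point P = (−5, 8) lies on the elliptic curve E : y² = x³ + 189 over ℚ, and P has infinite order in E(ℚ). -/
open WeierstrassCurve.Affine WeierstrassCurve.Affine.Point

/-- The elliptic curve `E : y² = x³ + 189` over `ℚ`. -/
def E189 : WeierstrassCurve ℚ := { a₁ := 0, a₂ := 0, a₃ := 0, a₄ := 0, a₆ := 189 }

local notation "V" => padicValRat 2

lemma V_add {a b : ℚ} (ha : a ≠ 0) (hb : b ≠ 0) (h : V a < V b) :
    a + b ≠ 0 ∧ V (a + b) = V a := by
  have hab : a + b ≠ 0 := by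
    intro h0
    have hba : b = -a := by linarith
    rw [hba, padicValRat.neg] at h
    exact lt_irrefl _ h
  exact ⟨hab, padicValRat.add_eq_of_lt hab ha hb h⟩

lemma V_odd_nat (n : ℕ) (hn : ¬ 2 ∣ n) : V (n : ℚ) = 0 := by
  rw [padicValRat.of_nat]
  simp [padicValNat.eq_zero_of_not_dvd hn]

lemma V_two : V (2 : ℚ) = 1 := by
  simpa using padicValRat.self (p := 2) (by norm_num)

lemma E189_negY (x y : ℚ) : E189.toAffine.negY x y = -y := by
  simp [WeierstrassCurve.Affine.negY, E189]

lemma E189_equation {x y : ℚ} (h : E189.toAffine.Equation x y) : y ^ 2 = x ^ 3 + 189 := by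
  have := (equation_iff _ _).mp h
  simp [E189] at this
  linarith

/-- Doubling a point with negative 2-adic valuation of `x` decreases it by 2. -/
lemma double_val {x y : ℚ} (h : E189.toAffine.Nonsingular x y) (hx : V x < 0) :
    ∃ (x' y' : ℚ) (h' : E189.toAffine.Nonsingular x' y'),
      Point.some _ _ h + Point.some _ _ h = Point.some _ _ h' ∧ V x' = V x - 2 := by
  have heq : y ^ 2 = x ^ 3 + 189 := E189_equation h.1
  have hx0 : x ≠ 0 := by rintro rfl; simp [padicValRat.zero] at hx
  have h189 : V (189 : ℚ) = 0 := by
    have := V_odd_nat 189 (by norm_num); norm_num at this ⊢; exact this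
  have hx3 : V (x ^ 3) = 3 * V x := padicValRat.pow x
  have hsum := V_add (a := x ^ 3) (b := 189) (pow_ne_zero 3 hx0) (by norm_num)
    (by rw [hx3, h189]; linarith)
  have hy0 : y ≠ 0 := by
    rintro rfl
    exact hsum.1 (by linarith [heq])
  have hyval : 2 * V y = 3 * V x := by
    have : V (y ^ 2) = V (x ^ 3 + 189) := by rw [heq]
    rwa [padicValRat.pow y, hsum.2, hx3] at this
  have hyne : y ≠ E189.toAffine.negY x y := by
    rw [E189_negY]
    intro hcontra
    exact hy0 (by linarith)
  refine ⟨_, _, _, add_self_of_Y_ne (h₁ := h) hyne, ?_⟩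
  -- compute the slope
  have hslope : E189.toAffine.slope x x y y = 3 * x ^ 2 / (2 * y) := by
    rw [slope_of_Y_ne rfl hyne]
    simp [E189]
    ring
  set L : ℚ := E189.toAffine.slope x x y y with hLdef
  have hL : L = 3 * x ^ 2 / (2 * y) := hslope
  have h3 : V (3 : ℚ) = 0 := by
    have := V_odd_nat 3 (by norm_num); norm_num at this ⊢; exact this
  have hnum : V (3 * x ^ 2) = 2 * V x := by
    rw [padicValRat.mul (by norm_num) (pow_ne_zero 2 hx0), padicValRat.pow x, h3]
    ring
  have hden : V (2 * y) = 1 + V y := by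
    rw [padicValRat.mul (by norm_num) hy0, V_two]
  have hL0 : L ≠ 0 := by
    rw [hL]
    exact div_ne_zero (by positivity) (by simpa using hy0)
  have hLval : V L = 2 * V x - 1 - V y := by
    rw [hL, padicValRat.div (by positivity) (by simpa using hy0), hnum, hden]
    ring
  have haddX : E189.toAffine.addX x x L = L ^ 2 + -(2 * x) := by
    simp [WeierstrassCurve.Affine.addX, E189]
    ring
  have hL2 : V (L ^ 2) = V x - 2 := by
    rw [padicValRat.pow L, hLval]
    push_cast
    linarith
  have h2x : V (-(2 * x)) = 1 + V x := by
    rw [padicValRat.neg, padicValRat.mul (by norm_num) hx0, V_two]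
  have := V_add (a := L ^ 2) (b := -(2 * x)) (pow_ne_zero 2 hL0)
    (by simpa using hx0) (by rw [hL2, h2x]; linarith)
  rw [haddX, this.2, hL2]

/-- Iterated doubling. -/
lemma iter_val {x y : ℚ} (h : E189.toAffine.Nonsingular x y) (hx : V x < 0) (n : ℕ) :
    ∃ (x' y' : ℚ) (h' : E189.toAffine.Nonsingular x' y'),
      (2 ^ n) • (Point.some _ _ h) = Point.some _ _ h' ∧ V x' = V x - 2 * n := by
  induction n with
  | zero => exact ⟨x, y, h, by simp, by simp⟩
  | succ n ih =>
    obtain ⟨x₁, y₁, h₁, hsm, hv⟩ := ih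
    have hx₁ : V x₁ < 0 := by rw [hv]; linarith [Int.natCast_nonneg n]
    obtain ⟨x₂, y₂, h₂, hadd, hv₂⟩ := double_val h₁ hx₁
    refine ⟨x₂, y₂, h₂, ?_, ?_⟩
    · rw [pow_succ, mul_comm, mul_smul, hsm, two_smul, hadd]
    · rw [hv₂, hv]; push_cast; ring

lemma no_fin_order {x y : ℚ} (h : E189.toAffine.Nonsingular x y) (hx : V x < 0) :
    ¬ IsOfFinAddOrder (WeierstrassCurve.Affine.Point.some _ _ h) := by
  intro hfin
  set T := WeierstrassCurve.Affine.Point.some _ _ h with hT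
  set m := addOrderOf T with hm
  have hm0 : 0 < m := addOrderOf_pos_iff.mpr hfin
  haveI : NeZero m := ⟨hm0.ne'⟩
  obtain ⟨a, b, hab, hfab⟩ :=
    Finite.exists_ne_map_eq_of_infinite (f := fun n : ℕ => ((2 ^ n : ℕ) : ZMod m))
  have hmod : 2 ^ a % m = 2 ^ b % m := (ZMod.natCast_eq_natCast_iff _ _ _).mp hfab
  have hsmul : (2 ^ a) • T = (2 ^ b) • T := by
    rw [← mod_addOrderOf_nsmul T (2 ^ a), ← mod_addOrderOf_nsmul T (2 ^ b), ← hm, hmod]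
  obtain ⟨xa, ya, ha, hea, hva⟩ := iter_val h hx a
  obtain ⟨xb, yb, hb, heb, hvb⟩ := iter_val h hx b
  rw [hea, heb] at hsmul
  have hxab : xa = xb := by
    injection hsmul
  apply hab
  have : V x - 2 * (a : ℤ) = V x - 2 * (b : ℤ) := by rw [← hva, ← hvb, hxab]
  omega

/-- The point `P = (−5, 8)` lies on the curve `y² = x³ + 189` (indeed is a
nonsingular point), and it has infinite order in the Mordell–Weil group
`E(ℚ)`. -/
theorem stmt_17 :
    E189.toAffine.Equation (-5) 8 ∧
    ∃ h : E189.toAffine.Nonsingular (-5) 8,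
      addOrderOf (WeierstrassCurve.Affine.Point.some _ _ h) = 0 := by
  have hP : E189.toAffine.Nonsingular (-5) 8 := by
    rw [nonsingular_iff, equation_iff]
    simp [E189]
    norm_num
  refine ⟨hP.1, hP, ?_⟩
  rw [addOrderOf_eq_zero_iff]
  intro hfin
  have hyne : (8 : ℚ) ≠ E189.toAffine.negY (-5) 8 := by
    rw [E189_negY]; norm_num
  have hdbl := add_self_of_Y_ne (h₁ := hP) hyne
  have hx2 : E189.toAffine.addX (-5) (-5) (E189.toAffine.slope (-5) (-5) 8 8)
      = 8185 / 256 := by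
    rw [slope_of_Y_ne rfl hyne]
    simp [WeierstrassCurve.Affine.addX, E189]
    norm_num
  have hV2 : V ((8185 : ℚ) / 256) = -8 := by
    rw [padicValRat.div (by norm_num) (by norm_num)]
    have h1 : V (8185 : ℚ) = 0 := by
      have := V_odd_nat 8185 (by norm_num); norm_num at this ⊢; exact this
    have h2 : V (256 : ℚ) = 8 := by
      rw [show (256 : ℚ) = 2 ^ 8 by norm_num, padicValRat.pow (2 : ℚ), V_two]
      norm_num
    rw [h1, h2]
    norm_num
  have hVlt : V (E189.toAffine.addX (-5) (-5) (E189.toAffine.slope (-5) (-5) 8 8)) < 0 := by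
    rw [hx2, hV2]; norm_num
  exact no_fin_order _ hVlt (hdbl ▸ hfin.add hfin)
end
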